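/- Let ‖·‖ be a norm on ℝ^d with dual norm ‖·‖_*, and for a d×d matrix H let ‖H‖ := max_{‖x‖ ≤ 1} ‖H x‖_*. Let f : ℝ^d → ℝ be twice continuously differentiable and (L⁰, L¹)-relaxed smooth with respect to ‖·‖, i.e. ‖∇²f(x)‖ ≤ L⁰ + L¹ ‖∇f(x)‖_* for all x, with L⁰ ≥ 0 and L¹ > 0. Then for any x, x' ∈ ℝ^d with ‖x' − x‖ ≤ 1/L¹, one has ‖∇f(x')‖_* ≤ 4 (L⁰/L¹ + ‖∇f(x)‖_*). -/

import Mathlib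

/-!
A norm on a finite-dimensional space has a compact unit ball, so the dual norm is finite,
convex and hence continuous. Write `‖·‖_*` for the dual norm and let `G` be the maximum of
`‖∇f‖_*` on a segment `[x, x + v]`. The mean value theorem and relaxed smoothness give
`‖∇f(y)‖_* ≤ ‖∇f(x)‖_* + (L⁰ + L¹ G) N(v)` for every `y` on the segment; for `N(v) ≤ 1/(2L¹)`,
taking `y` at the maximum yields `G ≤ 2‖∇f(x)‖_* + L⁰/L¹`. Applying this to both halves of
`[x, x']` gives the factor `4`.
-/

/-- The dual norm of a norm `N` on `ℝ^d`: `‖z‖_* = sup_{N x ≤ 1} ⟪z, x⟫`. -/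
noncomputable def dualNorm {d : ℕ} (N : EuclideanSpace ℝ (Fin d) → ℝ)
    (z : EuclideanSpace ℝ (Fin d)) : ℝ :=
  sSup ((fun x => (inner ℝ z x : ℝ)) '' {x | N x ≤ 1})

/-- The matrix norm induced by a norm `N` on `ℝ^d`: `‖H‖ = max_{N x ≤ 1} ‖H x‖_*`,
for a linear map `H` on `ℝ^d`. -/
noncomputable def inducedMatrixNorm {d : ℕ} (N : EuclideanSpace ℝ (Fin d) → ℝ)
    (H : EuclideanSpace ℝ (Fin d) →L[ℝ] EuclideanSpace ℝ (Fin d)) : ℝ :=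
  sSup ((fun x => dualNorm N (H x)) '' {x | N x ≤ 1})

open Set

namespace Seminorm

variable {E : Type*} [NormedAddCommGroup E] [NormedSpace ℝ E] [FiniteDimensional ℝ E]
  (p : Seminorm ℝ E)

theorem continuous_of_finiteDimensional : Continuous p :=
  p.convexOn.locallyLipschitz.continuous

theorem exists_pos_mul_norm_le (hp : ∀ x, p x = 0 → x = 0) :
    ∃ c > 0, ∀ x, c * ‖x‖ ≤ p x := by
  rcases subsingleton_or_nontrivial E with hE | hE
  · exact ⟨1, one_pos, fun x => by simp [Subsingleton.elim x 0]⟩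
  obtain ⟨z, hz, hmin⟩ := (isCompact_sphere (0 : E) 1).exists_isMinOn
    (NormedSpace.sphere_nonempty.2 zero_le_one) p.continuous_of_finiteDimensional.continuousOn
  have hz0 : z ≠ 0 := Metric.ne_of_mem_sphere hz one_ne_zero
  refine ⟨p z, (apply_nonneg p z).lt_of_ne' (mt (hp z) hz0), fun x => ?_⟩
  rcases eq_or_ne x 0 with rfl | hx
  · simp
  have hzx : p z ≤ ‖x‖⁻¹ * p x := by
    simpa [map_smul_eq_mul] using hmin (a := ‖x‖⁻¹ • x) (by simp [norm_smul, hx])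
  calc p z * ‖x‖ ≤ ‖x‖⁻¹ * p x * ‖x‖ := by gcongr
    _ = p x := by field_simp

theorem isCompact_setOf_le (hp : ∀ x, p x = 0 → x = 0) (r : ℝ) :
    IsCompact {x | p x ≤ r} := by
  obtain ⟨c, hc, hcp⟩ := p.exists_pos_mul_norm_le hp
  refine Metric.isCompact_of_isClosed_isBounded
    (isClosed_le p.continuous_of_finiteDimensional continuous_const)
    (Metric.isBounded_closedBall (x := 0) (r := r / c) |>.subset fun x hx => ?_)
  rw [mem_closedBall_zero_iff, le_div_iff₀ hc, mul_comm]
  exact (hcp x).trans hx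

end Seminorm

theorem ContDiff.differentiable_gradient {E : Type*} [NormedAddCommGroup E]
    [InnerProductSpace ℝ E] [CompleteSpace E] {f : E → ℝ} (hf : ContDiff ℝ 2 f) :
    Differentiable ℝ (gradient f) :=
  ((InnerProductSpace.toDual ℝ E).symm.contDiff.comp
    (hf.fderiv_right (m := 1) (by norm_num))).differentiable one_ne_zero

section DualNorm

variable {d : ℕ} {p : Seminorm ℝ (EuclideanSpace ℝ (Fin d))}

theorem dualNorm_le {z : EuclideanSpace ℝ (Fin d)} {B : ℝ}
    (h : ∀ x, p x ≤ 1 → inner ℝ z x ≤ B) : dualNorm p z ≤ B :=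
  csSup_le ⟨_, 0, by simp, rfl⟩ <| forall_mem_image.2 h

variable (hp : ∀ x, p x = 0 → x = 0)
include hp

theorem inner_le_dualNorm {x : EuclideanSpace ℝ (Fin d)} (z : EuclideanSpace ℝ (Fin d))
    (hx : p x ≤ 1) : inner ℝ z x ≤ dualNorm p z :=
  le_csSup ((p.isCompact_setOf_le hp 1).bddAbove_image (innerSL ℝ z).continuous.continuousOn)
    ⟨x, hx, rfl⟩

theorem dualNorm_nonneg (z : EuclideanSpace ℝ (Fin d)) : 0 ≤ dualNorm p z := by
  simpa using inner_le_dualNorm hp z (x := 0) (by simp)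

theorem dualNorm_add_le (z w : EuclideanSpace ℝ (Fin d)) :
    dualNorm p (z + w) ≤ dualNorm p z + dualNorm p w :=
  dualNorm_le fun x hx => by
    rw [inner_add_left]
    exact add_le_add (inner_le_dualNorm hp z hx) (inner_le_dualNorm hp w hx)

theorem dualNorm_smul_le {a : ℝ} (ha : 0 ≤ a) (z : EuclideanSpace ℝ (Fin d)) :
    dualNorm p (a • z) ≤ a * dualNorm p z :=
  dualNorm_le fun x hx => by
    rw [real_inner_smul_left]
    exact mul_le_mul_of_nonneg_left (inner_le_dualNorm hp z hx) ha

theorem convexOn_dualNorm : ConvexOn ℝ univ (dualNorm p) :=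
  ⟨convex_univ, fun z _ w _ _ _ ha hb _ =>
    (dualNorm_add_le hp _ _).trans
      (add_le_add (dualNorm_smul_le hp ha z) (dualNorm_smul_le hp hb w))⟩

theorem continuous_dualNorm : Continuous (dualNorm p) :=
  (convexOn_dualNorm hp).locallyLipschitz.continuous

theorem dualNorm_apply_le_inducedMatrixNorm
    (H : EuclideanSpace ℝ (Fin d) →L[ℝ] EuclideanSpace ℝ (Fin d))
    {x : EuclideanSpace ℝ (Fin d)} (hx : p x ≤ 1) :
    dualNorm p (H x) ≤ inducedMatrixNorm p H :=
  le_csSup ((p.isCompact_setOf_le hp 1).bddAbove_image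
    ((continuous_dualNorm hp).comp H.continuous).continuousOn) ⟨x, hx, rfl⟩

theorem dualNorm_apply_le (H : EuclideanSpace ℝ (Fin d) →L[ℝ] EuclideanSpace ℝ (Fin d))
    {v : EuclideanSpace ℝ (Fin d)} {r : ℝ} (hr : 0 < r) (hv : p v ≤ r) :
    dualNorm p (H v) ≤ r * inducedMatrixNorm p H := by
  have hv' : p (r⁻¹ • v) ≤ 1 := by
    rw [map_smul_eq_mul, Real.norm_eq_abs, abs_inv, abs_of_pos hr]
    exact inv_mul_le_one_of_le₀ hv hr.le
  calc dualNorm p (H v) = dualNorm p (r • H (r⁻¹ • v)) := by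
        rw [map_smul, smul_smul, mul_inv_cancel₀ hr.ne', one_smul]
    _ ≤ r * inducedMatrixNorm p H := by
        grw [dualNorm_smul_le hp hr.le, dualNorm_apply_le_inducedMatrixNorm hp H hv']

theorem dualNorm_sub_le_of_forall_fderiv_le {F : EuclideanSpace ℝ (Fin d) → EuclideanSpace ℝ (Fin d)}
    (hF : Differentiable ℝ F) {a v : EuclideanSpace ℝ (Fin d)} {M : ℝ}
    (hM : ∀ t ∈ Icc (0 : ℝ) 1, dualNorm p (fderiv ℝ F (a + t • v) v) ≤ M) :
    dualNorm p (F (a + v) - F a) ≤ M := by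
  refine dualNorm_le fun x hx => ?_
  have hline (t : ℝ) : HasDerivAt (fun s : ℝ => a + s • v) v t := by
    simpa using ((hasDerivAt_id t).smul_const v).const_add a
  have hφ (t : ℝ) : HasDerivAt (fun s : ℝ => inner ℝ (F (a + s • v)) x)
      (inner ℝ (fderiv ℝ F (a + t • v) v) x) t := by
    simpa using ((hF _).hasFDerivAt.comp_hasDerivAt t (hline t)).inner ℝ (hasDerivAt_const t x)
  obtain ⟨t, ht, hslope⟩ := exists_hasDerivAt_eq_slope _ _ zero_lt_one
    (fun t _ => (hφ t).continuousAt.continuousWithinAt) fun t _ => hφ t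
  simp only [zero_smul, add_zero, one_smul, sub_zero, div_one] at hslope
  rw [inner_sub_left, ← hslope]
  exact (inner_le_dualNorm hp _ hx).trans (hM t (Ioo_subset_Icc_self ht))

end DualNorm

theorem dualNorm_apply_add_le_two_mul_add {d : ℕ} {p : Seminorm ℝ (EuclideanSpace ℝ (Fin d))}
    (hp : ∀ x, p x = 0 → x = 0) {F : EuclideanSpace ℝ (Fin d) → EuclideanSpace ℝ (Fin d)}
    (hF : Differentiable ℝ F) {L0 L1 : ℝ} (hL1 : 0 < L1)
    (hrelax : ∀ y, inducedMatrixNorm p (fderiv ℝ F y) ≤ L0 + L1 * dualNorm p (F y))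
    (x : EuclideanSpace ℝ (Fin d)) {v : EuclideanSpace ℝ (Fin d)} (hv : p v ≤ 1 / (2 * L1)) :
    dualNorm p (F (x + v)) ≤ 2 * dualNorm p (F x) + L0 / L1 := by
  set g := fun y => dualNorm p (F y)
  have hg : Continuous fun s : ℝ => g (x + s • v) :=
    (continuous_dualNorm hp).comp (hF.continuous.comp (by fun_prop))
  obtain ⟨s₀, hs₀, hmax⟩ :=
    isCompact_Icc.exists_isMaxOn (nonempty_Icc.2 zero_le_one) hg.continuousOn
  set G := g (x + s₀ • v)
  have hr : 0 < 1 / (2 * L1) := by positivity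
  have hgrowth : ∀ s ∈ Icc (0 : ℝ) 1, g (x + s • v) ≤ g x + 1 / (2 * L1) * (L0 + L1 * G) := by
    intro s hs
    have hsv : p (s • v) ≤ 1 / (2 * L1) := by
      rw [map_smul_eq_mul, Real.norm_eq_abs, abs_of_nonneg hs.1]
      exact (mul_le_of_le_one_left (apply_nonneg p v) hs.2).trans hv
    have hseg : ∀ t ∈ Icc (0 : ℝ) 1,
        dualNorm p (fderiv ℝ F (x + t • s • v) (s • v)) ≤ 1 / (2 * L1) * (L0 + L1 * G) := by
      intro t ht
      have hts : t * s ∈ Icc (0 : ℝ) 1 :=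
        ⟨mul_nonneg ht.1 hs.1, mul_le_one₀ ht.2 hs.1 hs.2⟩
      have hG : dualNorm p (F (x + t • s • v)) ≤ G := by rw [smul_smul]; exact hmax hts
      calc _ ≤ 1 / (2 * L1) * inducedMatrixNorm p (fderiv ℝ F (x + t • s • v)) :=
            dualNorm_apply_le hp _ hr hsv
        _ ≤ 1 / (2 * L1) * (L0 + L1 * G) := by grw [hrelax, hG]
    calc g (x + s • v) ≤ g x + dualNorm p (F (x + s • v) - F x) := by
          simpa [g] using dualNorm_add_le hp (F x) (F (x + s • v) - F x)
      _ ≤ g x + 1 / (2 * L1) * (L0 + L1 * G) := by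
          grw [dualNorm_sub_le_of_forall_fderiv_le hp hF hseg]
  have hG : G ≤ 2 * g x + L0 / L1 := by
    have h := hgrowth s₀ hs₀
    field_simp at h ⊢
    linarith
  simpa using (hmax ⟨zero_le_one, le_rfl⟩ : g (x + (1 : ℝ) • v) ≤ G).trans hG

/-- If `f` is twice continuously differentiable and `(L⁰, L¹)`-relaxed smooth w.r.t. a norm
`N`, i.e. `‖∇²f(x)‖ ≤ L⁰ + L¹ ‖∇f(x)‖_*` for all `x`, then for `N(x' - x) ≤ 1/L¹` one has
`‖∇f(x')‖_* ≤ 4 (L⁰/L¹ + ‖∇f(x)‖_*)`. -/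
theorem relaxed_smoothness_gradient_growth {d : ℕ}
    (N : EuclideanSpace ℝ (Fin d) → ℝ)
    (hN_def : ∀ x, N x = 0 ↔ x = 0)
    (hN_smul : ∀ (c : ℝ) x, N (c • x) = |c| * N x)
    (hN_add : ∀ x y, N (x + y) ≤ N x + N y)
    (f : EuclideanSpace ℝ (Fin d) → ℝ) (hf : ContDiff ℝ 2 f)
    (L0 L1 : ℝ) (hL0 : 0 ≤ L0) (hL1 : 0 < L1)
    (hrelax : ∀ x, inducedMatrixNorm N (fderiv ℝ (gradient f) x)
      ≤ L0 + L1 * dualNorm N (gradient f x)) :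
    ∀ x x' : EuclideanSpace ℝ (Fin d), N (x' - x) ≤ 1 / L1 →
      dualNorm N (gradient f x') ≤ 4 * (L0 / L1 + dualNorm N (gradient f x)) := by
  obtain ⟨p, rfl⟩ : ∃ p : Seminorm ℝ (EuclideanSpace ℝ (Fin d)), ⇑p = N :=
    ⟨.of N hN_add fun c x => by rw [hN_smul, Real.norm_eq_abs], rfl⟩
  have hp (x) : p x = 0 → x = 0 := (hN_def x).1
  have half_step := dualNorm_apply_add_le_two_mul_add hp hf.differentiable_gradient hL1 hrelax
  intro x x' hxx'
  set v := (2⁻¹ : ℝ) • (x' - x)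
  have hv : p v ≤ 1 / (2 * L1) := by
    rw [map_smul_eq_mul, Real.norm_eq_abs, abs_of_pos (by norm_num)]
    calc 2⁻¹ * p (x' - x) ≤ 2⁻¹ * (1 / L1) := by gcongr
      _ = 1 / (2 * L1) := by ring
  have h₁ := half_step x hv
  have h₂ := half_step (x + v) hv
  rw [add_assoc, ← two_smul ℝ v, smul_smul, mul_inv_cancel₀ two_ne_zero, one_smul,
    add_sub_cancel] at h₂
  have : 0 ≤ L0 / L1 := by positivity
  linarith
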